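/- arXiv:1702.06967 — 6 statements merged into one kernel-verified Lean document; each statement's English description precedes it below -/
import Mathlib

section
/- (Subadditivity of ρ̂.) Let a_•, b_• be vanishing sequences of rank r and degree d, let g_1, g_2 ≥ 0 be integers with g = g_1 + g_2, and let b¹_•, a²_• be complementary vanishing sequences of rank r and degree d. Then ρ̂(g,d;a_•,b_•) ≥ ρ̂(g_1,d;a_•,b¹_•) + ρ̂(g_2,d;a²_•,b_•). -/
/-- `a` is a vanishing sequence of rank `r` and degree `d`: a strictly increasing
sequence of integers `0 ≤ a 0 < a 1 < ⋯ < a r ≤ d`. -/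
def IsVanishingSeq (r : ℕ) (d : ℤ) (a : Fin (r + 1) → ℤ) : Prop :=
  StrictMono a ∧ 0 ≤ a 0 ∧ a (Fin.last r) ≤ d

/-- The Brill–Noether number `ρ(g,d;a,b) = g - ∑ⱼ (aⱼ + b_{r-j} - (d - g))`. -/
def BNrho (g : ℤ) (r : ℕ) (d : ℤ) (a b : Fin (r + 1) → ℤ) : ℤ :=
  g - ∑ j : Fin (r + 1), (a j + b j.rev - (d - g))

/-- The adjusted Brill–Noether number
`ρ̂(g,d;a,b) = g - ∑ⱼ max (aⱼ + b_{r-j} - (d - g)) 0`. -/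
def BNrhoHat (g : ℤ) (r : ℕ) (d : ℤ) (a b : Fin (r + 1) → ℤ) : ℤ :=
  g - ∑ j : Fin (r + 1), max (a j + b j.rev - (d - g)) 0

/-! Complementarity gives `b¹_{r-j} + a²_j = d`, so for each `j` the correction term
`a_j + b_{r-j} - (d - g)` of `ρ̂(g,d;a,b)` is the sum of the `j`-th correction terms of
`ρ̂(g₁,d;a,b¹)` and `ρ̂(g₂,d;a²,b)`. Since `x ↦ max x 0` is subadditive, summing over `j`
gives the inequality. -/

theorem max_add_zero_le_add {α : Type*} [AddCommMonoid α] [LinearOrder α]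
    [IsOrderedAddMonoid α] (x y : α) : max (x + y) 0 ≤ max x 0 + max y 0 := by
  simpa only [add_zero] using max_add_add_le_max_add_max (a := x) (b := y) (c := 0) (d := 0)

theorem rhoHat_correction_eq_add (d g₁ g₂ x y b₁ a₂ : ℤ) (hcomp : b₁ + a₂ = d) :
    x + y - (d - (g₁ + g₂)) = (x + b₁ - (d - g₁)) + (a₂ + y - (d - g₂)) := by
  linarith

theorem rhoHat_subadditive_general (r : ℕ) (d : ℤ)
    (g g₁ g₂ : ℤ) (hg : g = g₁ + g₂)
    (a b b₁ a₂ : Fin (r + 1) → ℤ)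
    (hcomp : ∀ j : Fin (r + 1), b₁ j + a₂ j.rev = d) :
    BNrhoHat g₁ r d a b₁ + BNrhoHat g₂ r d a₂ b ≤ BNrhoHat g r d a b := by
  have hsum : ∑ j, max (a j + b j.rev - (d - g)) 0 ≤
      ∑ j, max (a j + b₁ j.rev - (d - g₁)) 0 + ∑ j, max (a₂ j + b j.rev - (d - g₂)) 0 := by
    rw [← Finset.sum_add_distrib]
    gcongr with j
    have hcomp_j := hcomp j.rev
    rw [Fin.rev_rev] at hcomp_j
    rw [hg, rhoHat_correction_eq_add d g₁ g₂ _ _ _ _ hcomp_j]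
    exact max_add_zero_le_add _ _
  unfold BNrhoHat
  linarith

/-- Subadditivity of ρ̂: for vanishing sequences `a`, `b` of rank `r` and
degree `d`, integers `g₁, g₂ ≥ 0` with `g = g₁ + g₂`, and complementary vanishing
sequences `b¹`, `a²` (i.e. `b¹ⱼ + a²_{r-j} = d` for all `j`),
`ρ̂(g,d;a,b) ≥ ρ̂(g₁,d;a,b¹) + ρ̂(g₂,d;a²,b)`. -/
theorem rhoHat_subadditive (r : ℕ) (d : ℤ) (hd : 0 ≤ d)
    (g g₁ g₂ : ℤ) (hg₁ : 0 ≤ g₁) (hg₂ : 0 ≤ g₂) (hg : g = g₁ + g₂)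
    (a b b₁ a₂ : Fin (r + 1) → ℤ)
    (ha : IsVanishingSeq r d a) (hb : IsVanishingSeq r d b)
    (hb₁ : IsVanishingSeq r d b₁) (ha₂ : IsVanishingSeq r d a₂)
    (hcomp : ∀ j : Fin (r + 1), b₁ j + a₂ j.rev = d) :
    BNrhoHat g₁ r d a b₁ + BNrhoHat g₂ r d a₂ b ≤ BNrhoHat g r d a b :=
  rhoHat_subadditive_general r d g g₁ g₂ hg a b b₁ a₂ hcomp
end

section
/- (Equality case of subadditivity of ρ̂.) Let a_•, b_• be vanishing sequences of rank r and degree d, let g_1, g_2 ≥ 0 be integers with g = g_1 + g_2, and let b¹_•, a²_• be complementary vanishing sequences of rank r and degree d. Then ρ̂(g,d;a_•,b_•) = ρ̂(g_1,d;a_•,b¹_•) + ρ̂(g_2,d;a²_•,b_•) holds if and only if: for every j with a_j + b¹_{r−j} > d − g_1 one has a²_j + b_{r−j} ≥ d − g_2, and for every j with a²_j + b_{r−j} > d − g_2 one has a_j + b¹_{r−j} ≥ d − g_1. -/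
/-!
Write `eⱼ = aⱼ + b_{r-j} - (d - g)` for the excess entering `ρ̂`. Complementarity of `b¹` and
`a²` makes the excesses additive, `eⱼ(g; a, b) = eⱼ(g₁; a, b¹) + eⱼ(g₂; a², b)`, so the claim is
the termwise equality case of `max (x + y) 0 ≤ max x 0 + max y 0`.
-/

section MaxZero

variable {α : Type*} [AddCommGroup α] [LinearOrder α] [IsOrderedAddMonoid α]

theorem max_add_zero_le (x y : α) : max (x + y) 0 ≤ max x 0 + max y 0 := by
  simpa using max_add_add_le_max_add_max (a := x) (b := y) (c := 0) (d := 0)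

theorem max_add_zero_eq_iff {x y : α} :
    max (x + y) 0 = max x 0 + max y 0 ↔ (0 < x → 0 ≤ y) ∧ (0 < y → 0 ≤ x) := by
  grind

theorem Finset.sum_max_add_zero_eq_iff {ι : Type*} (s : Finset ι) (f h : ι → α) :
    ∑ i ∈ s, max (f i + h i) 0 = ∑ i ∈ s, max (f i) 0 + ∑ i ∈ s, max (h i) 0 ↔
      ∀ i ∈ s, (0 < f i → 0 ≤ h i) ∧ (0 < h i → 0 ≤ f i) := by
  rw [← Finset.sum_add_distrib,
    Finset.sum_eq_sum_iff_of_le fun i _ => max_add_zero_le (f i) (h i)]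
  simp only [max_add_zero_eq_iff]

end MaxZero

theorem excess_add_excess_of_complementary {r : ℕ} {d : ℤ} {b₁ a₂ : Fin (r + 1) → ℤ}
    (hcomp : ∀ j : Fin (r + 1), b₁ j + a₂ j.rev = d) (g₁ g₂ : ℤ) (a b : Fin (r + 1) → ℤ)
    (j : Fin (r + 1)) :
    (a j + b₁ j.rev - (d - g₁)) + (a₂ j + b j.rev - (d - g₂)) =
      a j + b j.rev - (d - (g₁ + g₂)) := by
  have hcomp_rev := hcomp j.rev
  rw [Fin.rev_rev] at hcomp_rev
  omega

theorem BNrhoHat_add_eq_iff (r : ℕ) (d g₁ g₂ : ℤ) (a b b₁ a₂ : Fin (r + 1) → ℤ) :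
    BNrhoHat (g₁ + g₂) r d a b = BNrhoHat g₁ r d a b₁ + BNrhoHat g₂ r d a₂ b ↔
      ∑ j, max (a j + b j.rev - (d - (g₁ + g₂))) 0 =
        ∑ j, max (a j + b₁ j.rev - (d - g₁)) 0 + ∑ j, max (a₂ j + b j.rev - (d - g₂)) 0 := by
  unfold BNrhoHat
  omega

theorem rhoHat_subadditive_eq_iff_general (r : ℕ) (d : ℤ)
    (g g₁ g₂ : ℤ) (hg : g = g₁ + g₂)
    (a b b₁ a₂ : Fin (r + 1) → ℤ)
    (hcomp : ∀ j : Fin (r + 1), b₁ j + a₂ j.rev = d) :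
    BNrhoHat g r d a b = BNrhoHat g₁ r d a b₁ + BNrhoHat g₂ r d a₂ b ↔
      (∀ j : Fin (r + 1), d - g₁ < a j + b₁ j.rev → d - g₂ ≤ a₂ j + b j.rev) ∧
      (∀ j : Fin (r + 1), d - g₂ < a₂ j + b j.rev → d - g₁ ≤ a j + b₁ j.rev) := by
  subst hg
  rw [BNrhoHat_add_eq_iff]
  simp_rw [← excess_add_excess_of_complementary hcomp]
  rw [Finset.sum_max_add_zero_eq_iff]
  simp only [Finset.mem_univ, true_implies, sub_pos, sub_nonneg, forall_and]

/-- Equality case of subadditivity of ρ̂: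
`ρ̂(g,d;a,b) = ρ̂(g₁,d;a,b¹) + ρ̂(g₂,d;a²,b)` holds if and only if:
for every `j` with `aⱼ + b¹_{r-j} > d - g₁` one has `a²ⱼ + b_{r-j} ≥ d - g₂`, and
for every `j` with `a²ⱼ + b_{r-j} > d - g₂` one has `aⱼ + b¹_{r-j} ≥ d - g₁`. -/
theorem rhoHat_subadditive_eq_iff (r : ℕ) (d : ℤ) (hd : 0 ≤ d)
    (g g₁ g₂ : ℤ) (hg₁ : 0 ≤ g₁) (hg₂ : 0 ≤ g₂) (hg : g = g₁ + g₂)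
    (a b b₁ a₂ : Fin (r + 1) → ℤ)
    (ha : IsVanishingSeq r d a) (hb : IsVanishingSeq r d b)
    (hb₁ : IsVanishingSeq r d b₁) (ha₂ : IsVanishingSeq r d a₂)
    (hcomp : ∀ j : Fin (r + 1), b₁ j + a₂ j.rev = d) :
    BNrhoHat g r d a b = BNrhoHat g₁ r d a b₁ + BNrhoHat g₂ r d a₂ b ↔
      (∀ j : Fin (r + 1), d - g₁ < a j + b₁ j.rev → d - g₂ ≤ a₂ j + b j.rev) ∧
      (∀ j : Fin (r + 1), d - g₂ < a₂ j + b j.rev → d - g₁ ≤ a j + b₁ j.rev) :=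
  rhoHat_subadditive_eq_iff_general r d g g₁ g₂ hg a b b₁ a₂ hcomp
end

section
/- Let g ≥ 1 be an integer, and let a_•, b_• be vanishing sequences of rank r and degree d with ρ̂(g,d;a_•,b_•) = 0. Let b¹_•, a²_• be complementary vanishing sequences of rank r and degree d with ρ̂(1,d;a_•,b¹_•) ≥ 0 and ρ̂(g−1,d;a²_•,b_•) ≥ 0. If an index j_0 satisfies a_{j_0} + b_{r−j_0} < d − g, then a_{j_0} + b¹_{r−j_0} ≠ d. -/
theorem add_rev_le_of_BNrhoHat_nonneg {g : ℤ} {r : ℕ} {d : ℤ} {a b : Fin (r + 1) → ℤ}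
    (hρ : 0 ≤ BNrhoHat g r d a b) {j₀ : Fin (r + 1)} (hj₀ : a j₀ + b j₀.rev = d)
    {j : Fin (r + 1)} (hj : j ≠ j₀) : a j + b j.rev ≤ d - g := by
  set term : Fin (r + 1) → ℤ := fun i ↦ max (a i + b i.rev - (d - g)) 0
  have hsum : term j₀ + term j ≤ g := calc
    term j₀ + term j ≤ term j₀ + ∑ i ∈ Finset.univ.erase j₀, term i := by
      gcongr
      exact Finset.single_le_sum (f := term) (fun i _ ↦ le_max_right _ _)
        (Finset.mem_erase.2 ⟨hj, Finset.mem_univ j⟩)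
    _ = ∑ i, term i := Finset.add_sum_erase _ _ (Finset.mem_univ j₀)
    _ ≤ g := by unfold BNrhoHat at hρ; linarith
  have hterm₀ : g ≤ term j₀ := by simp only [term, hj₀, sub_sub_cancel, le_max_left]
  have hterm : a j + b j.rev - (d - g) ≤ term j := le_max_left _ _
  linarith

theorem BNrhoHat_sub_one_le {g : ℤ} {r : ℕ} {d : ℤ} {a a' b : Fin (r + 1) → ℤ}
    {j₀ : Fin (r + 1)} (hlt : ∀ j ≠ j₀, a j < a' j) (hj₀ : a j₀ + b j₀.rev < d - g) :
    BNrhoHat (g - 1) r d a' b ≤ BNrhoHat g r d a b - 1 := by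
  have hle : ∑ j, max (a j + b j.rev - (d - g)) 0
      ≤ ∑ j, max (a' j + b j.rev - (d - (g - 1))) 0 := by
    refine Finset.sum_le_sum fun j _ ↦ ?_
    by_cases hj : j = j₀
    · subst hj
      rw [max_eq_right (by linarith)]
      exact le_max_right _ _
    · exact max_le_max_right 0 (by linarith [hlt j hj])
  unfold BNrhoHat
  linarith

theorem not_eq_d_of_lt_general (r : ℕ) (d : ℤ) (g : ℤ)
    (a b b₁ a₂ : Fin (r + 1) → ℤ)
    (hcomp : ∀ j : Fin (r + 1), b₁ j + a₂ j.rev = d)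
    (hρ : BNrhoHat g r d a b = 0)
    (hρ₁ : 0 ≤ BNrhoHat 1 r d a b₁) (hρ₂ : 0 ≤ BNrhoHat (g - 1) r d a₂ b)
    (j₀ : Fin (r + 1)) (hj₀ : a j₀ + b j₀.rev < d - g) :
    a j₀ + b₁ j₀.rev ≠ d := by
  intro heq
  have hlt : ∀ j ≠ j₀, a j < a₂ j := fun j hj ↦ by
    have hcomp_rev := hcomp j.rev
    rw [Fin.rev_rev] at hcomp_rev
    linarith [add_rev_le_of_BNrhoHat_nonneg hρ₁ heq hj]
  linarith [BNrhoHat_sub_one_le (b := b) hlt hj₀]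

/-- with `g ≥ 1`, `ρ̂(g,d;a,b) = 0`, and complementary vanishing sequences
`b¹`, `a²` with `ρ̂(1,d;a,b¹) ≥ 0` and `ρ̂(g-1,d;a²,b) ≥ 0`, if an index `j₀` satisfies
`a_{j₀} + b_{r-j₀} < d - g` then `a_{j₀} + b¹_{r-j₀} ≠ d`. -/
theorem not_eq_d_of_lt (r : ℕ) (d : ℤ) (hd : 0 ≤ d) (g : ℤ) (hg : 1 ≤ g)
    (a b b₁ a₂ : Fin (r + 1) → ℤ)
    (ha : IsVanishingSeq r d a) (hb : IsVanishingSeq r d b)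
    (hb₁ : IsVanishingSeq r d b₁) (ha₂ : IsVanishingSeq r d a₂)
    (hcomp : ∀ j : Fin (r + 1), b₁ j + a₂ j.rev = d)
    (hρ : BNrhoHat g r d a b = 0)
    (hρ₁ : 0 ≤ BNrhoHat 1 r d a b₁) (hρ₂ : 0 ≤ BNrhoHat (g - 1) r d a₂ b)
    (j₀ : Fin (r + 1)) (hj₀ : a j₀ + b j₀.rev < d - g) :
    a j₀ + b₁ j₀.rev ≠ d :=
  not_eq_d_of_lt_general r d g a b b₁ a₂ hcomp hρ hρ₁ hρ₂ j₀ hj₀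
end

section
/- Let g ≥ 1 be an integer, and let a_•, b_• be vanishing sequences of rank r and degree d with ρ̂(g,d;a_•,b_•) = 0. Let b¹_•, a²_• be complementary vanishing sequences of rank r and degree d with ρ̂(1,d;a_•,b¹_•) ≥ 0 and ρ̂(g−1,d;a²_•,b_•) ≥ 0. Suppose j_0 is an index such that: a_{j_0} + b_{r−j_0} < d − g; the sequence obtained from a_• by replacing a_{j_0} with a_{j_0}+1 is again a vanishing sequence; and a_{j_0} + b¹_{r−j_0} = d − 1. Then: (i) a²_{j_0} + b_{r−j_0} < d − (g−1); (ii) if j_0 < r then a²_{j_0+1} > a²_{j_0} + 1; and (iii) the sequences b̄¹_• obtained from b¹_• by replacing b¹_{r−j_0} with b¹_{r−j_0} − 1, and ā²_• obtained from a²_• by replacing a²_{j_0} with a²_{j_0} + 1, are complementary vanishing sequences of rank r and degree d satisfying ρ̂(1,d;a_•,b̄¹_•) ≥ 0 and ρ̂(g−1,d;ā²_•,b_•) ≥ 0. -/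
/-!
Complementarity gives `a²ⱼ = d - b¹_{r-j}`, and `ρ̂(1,d;a,b¹) ≥ 0` forces `aⱼ + b¹_{r-j} ≤ d`,
i.e. `a ≤ a²`, with equality at no more than one index; at `j₀` we get `a²_{j₀} = a_{j₀} + 1`.
If `a²ᵢ ≤ a²_{j₀} + 1` for some `i > j₀`, then `aᵢ ≥ a_{j₀} + 2` (since `ā` increases) forces
`aᵢ = a²ᵢ`, so `i` is the unique tight index: `a + 1 ≤ a²` everywhere else, while `i`
contributes nothing to `ρ̂(g,d;a,b)` because `b_{r-i} < b_{r-j₀}`. Comparing term by term then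
gives `ρ̂(g-1,d;a²,b) + 1 ≤ ρ̂(g,d;a,b) = 0`, a contradiction. This gap makes `ā²` a vanishing
sequence, `b̄¹` is its complement, and neither move increases a positive term of either `ρ̂`.
-/

open Function

section
variable {r : ℕ} {d : ℤ}

theorem sub_BNrhoHat_le_sub_BNrhoHat {g g' : ℤ} {a b a' b' : Fin (r + 1) → ℤ}
    (h : ∀ j, max (a j + b j.rev - (d - g)) 0 ≤ max (a' j + b' j.rev - (d - g')) 0) :
    g - BNrhoHat g r d a b ≤ g' - BNrhoHat g' r d a' b' := by
  simpa [BNrhoHat] using Finset.sum_le_sum fun j _ => h j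

theorem BNrhoHat_le_BNrhoHat_of_le_right {g : ℤ} {a b b' : Fin (r + 1) → ℤ} (h : b' ≤ b) :
    BNrhoHat g r d a b ≤ BNrhoHat g r d a b' := by
  have := sub_BNrhoHat_le_sub_BNrhoHat (d := d) (g := g) (g' := g) (a := a) (a' := a)
    (b := b') (b' := b) fun j => by gcongr; exact h j.rev
  linarith

theorem BNrhoHat_le_BNrhoHat_update_left {g x : ℤ} {a b : Fin (r + 1) → ℤ} {i : Fin (r + 1)}
    (hx : x + b i.rev ≤ d - g) :
    BNrhoHat g r d a b ≤ BNrhoHat g r d (update a i x) b := by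
  have := sub_BNrhoHat_le_sub_BNrhoHat (d := d) (g := g) (g' := g) (a := update a i x) (a' := a)
    (b := b) (b' := b) fun j => by
      rcases eq_or_ne j i with rfl | hj
      · rw [update_self, max_eq_right (by linarith)]
        exact le_max_right _ _
      · rw [update_of_ne hj]
  linarith

theorem BNrhoHat_sub_one_add_one_le {g : ℤ} {a a' b : Fin (r + 1) → ℤ}
    (h : ∀ j, a j + b j.rev ≤ d - g ∨ a j + 1 ≤ a' j) :
    BNrhoHat (g - 1) r d a' b + 1 ≤ BNrhoHat g r d a b := by
  have := sub_BNrhoHat_le_sub_BNrhoHat (d := d) (g := g) (g' := g - 1) (a := a) (a' := a')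
    (b := b) (b' := b) fun j => by
      rcases h j with h | h
      · rw [max_eq_right (by linarith)]
        exact le_max_right _ _
      · exact max_le_max (by linarith) le_rfl
  linarith

theorem add_le_of_BNrhoHat_nonneg {g : ℤ} {a b : Fin (r + 1) → ℤ} (h : 0 ≤ BNrhoHat g r d a b)
    (j : Fin (r + 1)) : a j + b j.rev ≤ d := by
  have := Finset.single_le_sum (f := fun j => max (a j + b j.rev - (d - g)) 0)
    (fun _ _ => le_max_right _ _) (Finset.mem_univ j)
  have := le_max_left (a j + b j.rev - (d - g)) 0
  unfold BNrhoHat at h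
  linarith

theorem add_lt_of_BNrhoHat_one_nonneg {a b : Fin (r + 1) → ℤ} (h : 0 ≤ BNrhoHat 1 r d a b)
    {i j : Fin (r + 1)} (hi : a i + b i.rev = d) (hji : j ≠ i) : a j + b j.rev < d := by
  have hpair := Finset.sum_le_sum_of_subset_of_nonneg (Finset.subset_univ {j, i})
    (f := fun j => max (a j + b j.rev - (d - 1)) 0) fun _ _ _ => le_max_right _ _
  rw [Finset.sum_pair hji, hi] at hpair
  norm_num at hpair
  have := le_max_left (a j + b j.rev - (d - 1)) 0
  unfold BNrhoHat at h
  linarith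

theorem IsVanishingSeq.of_add_rev_eq {a b : Fin (r + 1) → ℤ} (ha : IsVanishingSeq r d a)
    (h : ∀ j, b j + a j.rev = d) : IsVanishingSeq r d b := by
  have hb : ∀ j, b j = d - a j.rev := fun j => by linarith [h j]
  obtain ⟨hmono, h0, hlast⟩ := ha
  refine ⟨fun i j hij => ?_, ?_, ?_⟩
  · rw [hb, hb]
    linarith [hmono (Fin.rev_lt_rev.mpr hij)]
  · rw [hb, Fin.rev_zero]
    linarith
  · rw [hb, Fin.rev_last]
    linarith

theorem IsVanishingSeq.update_add_one {a : Fin (r + 1) → ℤ} (ha : IsVanishingSeq r d a)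
    {i : Fin (r + 1)} (hgap : ∀ j, i < j → a i + 1 < a j) (hi : a i < d) :
    IsVanishingSeq r d (update a i (a i + 1)) := by
  obtain ⟨hmono, h0, hlast⟩ := ha
  refine ⟨fun x y hxy => ?_, ?_, ?_⟩
  · simp only [update_apply]
    split_ifs with hx hy hy
    · exact absurd (hx.trans hy.symm) hxy.ne
    · exact hx ▸ hgap y (hx ▸ hxy)
    · linarith [hmono (hy ▸ hxy)]
    · exact hmono hxy
  · rw [update_apply]
    split_ifs <;> linarith [hmono.monotone (Fin.zero_le i)]
  · rw [update_apply]
    split_ifs <;> linarith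

theorem update_add_update_rev_eq {a b : Fin (r + 1) → ℤ} (h : ∀ j, b j + a j.rev = d)
    (i : Fin (r + 1)) (c : ℤ) (j : Fin (r + 1)) :
    update b i.rev (b i.rev - c) j + update a i (a i + c) j.rev = d := by
  rcases eq_or_ne j i.rev with rfl | hj
  · simp only [update_self, Fin.rev_rev]
    linarith [Fin.rev_rev i ▸ h i.rev]
  · rw [update_of_ne hj, update_of_ne fun h => hj (Fin.rev_eq_iff.mp h)]
    exact h j

end

theorem second_move_setup_general (r : ℕ) (d : ℤ) (g : ℤ) (hg : 1 ≤ g)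
    (a b b₁ a₂ : Fin (r + 1) → ℤ)
    (hb : IsVanishingSeq r d b)
    (ha₂ : IsVanishingSeq r d a₂)
    (hcomp : ∀ j : Fin (r + 1), b₁ j + a₂ j.rev = d)
    (hρ : BNrhoHat g r d a b = 0)
    (hρ₁ : 0 ≤ BNrhoHat 1 r d a b₁) (hρ₂ : 0 ≤ BNrhoHat (g - 1) r d a₂ b)
    (j₀ : Fin (r + 1))
    (hj₀b : a j₀ + b j₀.rev < d - g)
    (habar : IsVanishingSeq r d (Function.update a j₀ (a j₀ + 1)))
    (hj₀b₁ : a j₀ + b₁ j₀.rev = d - 1) :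
    a₂ j₀ + b j₀.rev < d - (g - 1) ∧
    ((j₀ : ℕ) < r → ∀ i : Fin (r + 1), (i : ℕ) = (j₀ : ℕ) + 1 → a₂ j₀ + 1 < a₂ i) ∧
    (IsVanishingSeq r d (Function.update b₁ j₀.rev (b₁ j₀.rev - 1)) ∧
      IsVanishingSeq r d (Function.update a₂ j₀ (a₂ j₀ + 1)) ∧
      (∀ j : Fin (r + 1), Function.update b₁ j₀.rev (b₁ j₀.rev - 1) j +
        Function.update a₂ j₀ (a₂ j₀ + 1) j.rev = d) ∧
      0 ≤ BNrhoHat 1 r d a (Function.update b₁ j₀.rev (b₁ j₀.rev - 1)) ∧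
      0 ≤ BNrhoHat (g - 1) r d (Function.update a₂ j₀ (a₂ j₀ + 1)) b) := by
  have ha₂_eq (j : Fin (r + 1)) : a₂ j = d - b₁ j.rev := by
    linarith [Fin.rev_rev j ▸ hcomp j.rev]
  have ha_le_a₂ (j : Fin (r + 1)) : a j ≤ a₂ j := by
    linarith [ha₂_eq j, add_le_of_BNrhoHat_nonneg hρ₁ j]
  have ha₂j₀ : a₂ j₀ = a j₀ + 1 := by linarith [ha₂_eq j₀]
  have hbj₀ : 0 ≤ b j₀.rev := hb.2.1.trans (hb.1.monotone (Fin.zero_le _))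
  have hgap (i : Fin (r + 1)) (hi : j₀ < i) : a₂ j₀ + 1 < a₂ i := by
    by_contra! hle
    have hai : a j₀ + 1 < a i := by simpa [update_of_ne hi.ne'] using habar.1 hi
    have htight : a i + b₁ i.rev = d := by linarith [ha₂_eq i, ha_le_a₂ i]
    have hslack (j : Fin (r + 1)) (hj : j ≠ i) : a j + 1 ≤ a₂ j := by
      linarith [add_lt_of_BNrhoHat_one_nonneg hρ₁ htight hj, ha₂_eq j]
    have hbi : b i.rev < b j₀.rev := hb.1 (Fin.rev_lt_rev.mpr hi)
    have := BNrhoHat_sub_one_add_one_le (d := d) (g := g) (a := a) (b := b) (a' := a₂) fun j =>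
      if hj : j = i then Or.inl (by rw [hj]; linarith [ha_le_a₂ i]) else Or.inr (hslack j hj)
    linarith
  have hā₂ := ha₂.update_add_one hgap (by linarith)
  have hcomp' := update_add_update_rev_eq hcomp j₀ 1
  refine ⟨by linarith, fun _ i hi => hgap i (Fin.lt_def.mpr (by omega)),
    hā₂.of_add_rev_eq hcomp', hā₂, hcomp', ?_, ?_⟩
  · exact hρ₁.trans (BNrhoHat_le_BNrhoHat_of_le_right (update_le_self_iff.mpr (by linarith)))
  · exact hρ₂.trans (BNrhoHat_le_BNrhoHat_update_left (by linarith))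

/-- with `g ≥ 1`, `ρ̂(g,d;a,b) = 0`, complementary vanishing sequences
`b¹`, `a²` with `ρ̂(1,d;a,b¹) ≥ 0` and `ρ̂(g-1,d;a²,b) ≥ 0`, and `j₀` an index such that
`a_{j₀} + b_{r-j₀} < d - g`, replacing `a_{j₀}` by `a_{j₀} + 1` gives a vanishing sequence,
and `a_{j₀} + b¹_{r-j₀} = d - 1`, then:
(i) `a²_{j₀} + b_{r-j₀} < d - (g-1)`;
(ii) if `j₀ < r` then `a²_{j₀+1} > a²_{j₀} + 1`; and
(iii) replacing `b¹_{r-j₀}` by `b¹_{r-j₀} - 1` and `a²_{j₀}` by `a²_{j₀} + 1` yields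
complementary vanishing sequences `b̄¹`, `ā²` with `ρ̂(1,d;a,b̄¹) ≥ 0` and
`ρ̂(g-1,d;ā²,b) ≥ 0`. -/
theorem second_move_setup (r : ℕ) (d : ℤ) (hd : 0 ≤ d) (g : ℤ) (hg : 1 ≤ g)
    (a b b₁ a₂ : Fin (r + 1) → ℤ)
    (ha : IsVanishingSeq r d a) (hb : IsVanishingSeq r d b)
    (hb₁ : IsVanishingSeq r d b₁) (ha₂ : IsVanishingSeq r d a₂)
    (hcomp : ∀ j : Fin (r + 1), b₁ j + a₂ j.rev = d)
    (hρ : BNrhoHat g r d a b = 0)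
    (hρ₁ : 0 ≤ BNrhoHat 1 r d a b₁) (hρ₂ : 0 ≤ BNrhoHat (g - 1) r d a₂ b)
    (j₀ : Fin (r + 1))
    (hj₀b : a j₀ + b j₀.rev < d - g)
    (habar : IsVanishingSeq r d (Function.update a j₀ (a j₀ + 1)))
    (hj₀b₁ : a j₀ + b₁ j₀.rev = d - 1) :
    a₂ j₀ + b j₀.rev < d - (g - 1) ∧
    ((j₀ : ℕ) < r → ∀ i : Fin (r + 1), (i : ℕ) = (j₀ : ℕ) + 1 → a₂ j₀ + 1 < a₂ i) ∧
    (IsVanishingSeq r d (Function.update b₁ j₀.rev (b₁ j₀.rev - 1)) ∧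
      IsVanishingSeq r d (Function.update a₂ j₀ (a₂ j₀ + 1)) ∧
      (∀ j : Fin (r + 1), Function.update b₁ j₀.rev (b₁ j₀.rev - 1) j +
        Function.update a₂ j₀ (a₂ j₀ + 1) j.rev = d) ∧
      0 ≤ BNrhoHat 1 r d a (Function.update b₁ j₀.rev (b₁ j₀.rev - 1)) ∧
      0 ≤ BNrhoHat (g - 1) r d (Function.update a₂ j₀ (a₂ j₀ + 1)) b) :=
  second_move_setup_general r d g hg a b b₁ a₂ hb ha₂ hcomp hρ hρ₁ hρ₂ j₀ hj₀b habar hj₀b₁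
end

section
/- (First type of move.) Let a_•, c_• be vanishing sequences of rank r and degree d with ρ̂(1,d;a_•,c_•) ≥ 0 and ρ(1,d;a_•,c_•) > 0. Let j_0 be the minimal index at which a_j + c_{r−j} attains its minimum value over j = 0,…,r. Then: (i) a_{j_0} + c_{r−j_0} ≤ d − 1; (ii) either j_0 = 0 or c_{r−j_0+1} ≥ c_{r−j_0} + 2; and (iii) the sequence c′_• obtained from c_• by replacing c_{r−j_0} with c_{r−j_0} + 1 is a vanishing sequence of rank r and degree d with ρ̂(1,d;a_•,c′_•) ≥ 0 and ρ(1,d;a_•,c′_•) = ρ(1,d;a_•,c_•) − 1. -/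
/-!
Write `eⱼ = aⱼ + c_{r-j} - (d - 1)`, so that `ρ = 1 - ∑ eⱼ` and `ρ̂ = 1 - ∑ max eⱼ 0`.
Raising `c_{r-j₀}` by one raises `e_{j₀}` alone by one, so `ρ` drops by one. Since `ρ > 0`
forces `∑ eⱼ ≤ 0`, the minimum `e_{j₀}` is `≤ 0`, which is (i). If `e_{j₀} < 0` the move leaves
`ρ̂` unchanged; if `e_{j₀} = 0` then every `eⱼ ≥ 0`, so `ρ̂ = ρ ≥ 1` and `ρ̂` stays `≥ 0`.
Minimality of `j₀` among the minimisers gives `e_{j₀-1} > e_{j₀}`, and as `a` is strictly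
increasing this leaves a gap of at least two above `c_{r-j₀}`, which is (ii) and keeps the new
sequence strictly increasing.
-/

open Function

def BNexcess (g : ℤ) (r : ℕ) (d : ℤ) (a b : Fin (r + 1) → ℤ) (j : Fin (r + 1)) : ℤ :=
  a j + b j.rev - (d - g)

theorem Finset.sum_update_univ {ι G : Type*} [Fintype ι] [DecidableEq ι] [AddCommGroup G]
    (f : ι → G) (j : ι) (v : G) :
    ∑ i, update f j v i = ∑ i, f i + (v - f j) := by
  rw [Finset.sum_update_of_mem (Finset.mem_univ j), ← Finset.add_sum_erase _ _ (Finset.mem_univ j),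
    Finset.sdiff_singleton_eq_erase]
  abel

theorem Fin.rev_lt_of_val_eq_val_rev_add_one {n : ℕ} {i j : Fin (n + 1)}
    (h : (i : ℕ) = (j.rev : ℕ) + 1) : i.rev < j := by
  simp only [Fin.lt_def, Fin.val_rev] at h ⊢
  omega

theorem apply_lt_of_lt_first_minimizer {ι α : Type*} [LinearOrder ι] [PartialOrder α]
    {f : ι → α} {j₀ j : ι} (hmin : ∀ j, f j₀ ≤ f j) (hminIdx : ∀ j, f j = f j₀ → j₀ ≤ j)
    (h : j < j₀) : f j₀ < f j :=
  (hmin j).lt_of_ne fun he => (hminIdx j he.symm).not_gt h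

section BrillNoether

variable {g : ℤ} {r : ℕ} {d : ℤ} {a b : Fin (r + 1) → ℤ}

theorem BNrho_eq_sub_sum_BNexcess : BNrho g r d a b = g - ∑ j, BNexcess g r d a b j := rfl

theorem BNrhoHat_eq_sub_sum_max_BNexcess :
    BNrhoHat g r d a b = g - ∑ j, max (BNexcess g r d a b j) 0 := rfl

theorem BNrhoHat_eq_BNrho_of_BNexcess_nonneg (h : ∀ j, 0 ≤ BNexcess g r d a b j) :
    BNrhoHat g r d a b = BNrho g r d a b := by
  rw [BNrhoHat_eq_sub_sum_max_BNexcess, BNrho_eq_sub_sum_BNexcess]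
  simp only [max_eq_left (h _)]

theorem BNexcess_update_rev_add_one (j : Fin (r + 1)) :
    BNexcess g r d a (update b j.rev (b j.rev + 1)) =
      update (BNexcess g r d a b) j (BNexcess g r d a b j + 1) := by
  ext i
  simp only [BNexcess, update_apply, Fin.rev_inj]
  split_ifs with h
  · subst h; ring
  · rfl

theorem BNrho_update_rev_add_one (j : Fin (r + 1)) :
    BNrho g r d a (update b j.rev (b j.rev + 1)) = BNrho g r d a b - 1 := by
  rw [BNrho_eq_sub_sum_BNexcess, BNrho_eq_sub_sum_BNexcess, BNexcess_update_rev_add_one,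
    Finset.sum_update_univ]
  ring

theorem BNrhoHat_update_rev_add_one (j : Fin (r + 1)) :
    BNrhoHat g r d a (update b j.rev (b j.rev + 1)) = BNrhoHat g r d a b -
      (max (BNexcess g r d a b j + 1) 0 - max (BNexcess g r d a b j) 0) := by
  rw [BNrhoHat_eq_sub_sum_max_BNexcess, BNrhoHat_eq_sub_sum_max_BNexcess,
    BNexcess_update_rev_add_one]
  have hmax : ∀ i, max (update (BNexcess g r d a b) j (BNexcess g r d a b j + 1) i) 0 =
      update (fun i => max (BNexcess g r d a b i) 0) j (max (BNexcess g r d a b j + 1) 0) i :=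
    apply_update (fun _ x => max x 0) _ _ _
  simp only [hmax, Finset.sum_update_univ]
  ring

theorem BNrhoHat_update_rev_add_one_nonneg {j₀ : Fin (r + 1)} (hρhat : 0 ≤ BNrhoHat g r d a b)
    (hρ : 0 < BNrho g r d a b) (hmin : ∀ j, BNexcess g r d a b j₀ ≤ BNexcess g r d a b j) :
    0 ≤ BNrhoHat g r d a (update b j₀.rev (b j₀.rev + 1)) := by
  rw [BNrhoHat_update_rev_add_one]
  rcases lt_or_ge (BNexcess g r d a b j₀) 0 with hneg | hnonneg
  · rw [max_eq_right (by omega), max_eq_right hneg.le]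
    simpa using hρhat
  · have hρhat_eq := BNrhoHat_eq_BNrho_of_BNexcess_nonneg fun j => hnonneg.trans (hmin j)
    rw [max_eq_left (by omega), max_eq_left hnonneg]
    omega

end BrillNoether

theorem IsVanishingSeq.update_add_one_s10 {r : ℕ} {d : ℤ} {c : Fin (r + 1) → ℤ} {k : Fin (r + 1)}
    (hc : IsVanishingSeq r d c) (hgap : ∀ i : Fin (r + 1), (i : ℕ) = (k : ℕ) + 1 → c k + 2 ≤ c i)
    (hlast : k = Fin.last r → c k + 1 ≤ d) :
    IsVanishingSeq r d (update c k (c k + 1)) := by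
  obtain ⟨hmono, hzero, hle⟩ := hc
  refine ⟨Fin.strictMono_iff_lt_succ.2 fun i => ?_, ?_, ?_⟩
  · have hstep := hmono (Fin.castSucc_lt_succ (i := i))
    have hgap_succ := hgap i.succ
    simp only [update_apply]
    split_ifs with hi hi' hi'
    · exact absurd (hi.trans hi'.symm) Fin.castSucc_lt_succ.ne
    · subst hi
      simp only [Fin.val_succ, Fin.val_castSucc, forall_const] at hgap_succ
      omega
    · subst hi'
      omega
    · exact hstep
  · rw [update_apply]
    split_ifs with h0
    · rw [← h0]; omega
    · exact hzero
  · rw [update_apply]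
    split_ifs with hk
    · exact hlast hk.symm
    · exact hle

theorem first_move_general (r : ℕ) (d : ℤ)
    (a c : Fin (r + 1) → ℤ)
    (ha : IsVanishingSeq r d a) (hc : IsVanishingSeq r d c)
    (hρhat : 0 ≤ BNrhoHat 1 r d a c) (hρ : 0 < BNrho 1 r d a c)
    (j₀ : Fin (r + 1))
    (hmin : ∀ j : Fin (r + 1), a j₀ + c j₀.rev ≤ a j + c j.rev)
    (hminIdx : ∀ j : Fin (r + 1), a j + c j.rev = a j₀ + c j₀.rev → j₀ ≤ j) :
    a j₀ + c j₀.rev ≤ d - 1 ∧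
    (j₀ = 0 ∨ ∀ i : Fin (r + 1), (i : ℕ) = (j₀.rev : ℕ) + 1 → c j₀.rev + 2 ≤ c i) ∧
    (IsVanishingSeq r d (Function.update c j₀.rev (c j₀.rev + 1)) ∧
      0 ≤ BNrhoHat 1 r d a (Function.update c j₀.rev (c j₀.rev + 1)) ∧
      BNrho 1 r d a (Function.update c j₀.rev (c j₀.rev + 1)) = BNrho 1 r d a c - 1) := by
  have hexcess_min : ∀ j, BNexcess 1 r d a c j₀ ≤ BNexcess 1 r d a c j := fun j =>
    sub_le_sub_right (hmin j) _
  have h_i : a j₀ + c j₀.rev ≤ d - 1 := by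
    have hsum : ∑ j, BNexcess 1 r d a c j ≤ ∑ _j : Fin (r + 1), 0 := by
      rw [Finset.sum_const_zero]
      rw [BNrho_eq_sub_sum_BNexcess] at hρ
      omega
    obtain ⟨j, -, hj⟩ := Finset.exists_le_of_sum_le Finset.univ_nonempty hsum
    have := (hexcess_min j).trans hj
    rw [BNexcess] at this
    omega
  have h_ii : ∀ i : Fin (r + 1), (i : ℕ) = (j₀.rev : ℕ) + 1 → c j₀.rev + 2 ≤ c i := by
    intro i hi
    have hlt := Fin.rev_lt_of_val_eq_val_rev_add_one hi
    have hsum := apply_lt_of_lt_first_minimizer (f := fun j => a j + c j.rev) hmin hminIdx hlt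
    have ha_lt := ha.1 hlt
    simp only [Fin.rev_rev] at hsum
    omega
  -- For `j₀ = 0` no index equals `j₀.rev + 1 = r + 1`, so the right disjunct always holds.
  refine ⟨h_i, Or.inr h_ii, hc.update_add_one_s10 h_ii fun hlast => ?_,
    BNrhoHat_update_rev_add_one_nonneg hρhat hρ hexcess_min, BNrho_update_rev_add_one j₀⟩
  obtain rfl : j₀ = 0 := by rw [← Fin.rev_rev j₀, hlast, Fin.rev_last]
  rw [hlast] at h_i ⊢
  linarith [ha.2.1]

/-- First type of move: for vanishing sequences `a`, `c` with
`ρ̂(1,d;a,c) ≥ 0` and `ρ(1,d;a,c) > 0`, and `j₀` the minimal index at which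
`a_j + c_{r-j}` attains its minimum, then:
(i) `a_{j₀} + c_{r-j₀} ≤ d - 1`;
(ii) either `j₀ = 0` or `c_{r-j₀+1} ≥ c_{r-j₀} + 2`; and
(iii) replacing `c_{r-j₀}` by `c_{r-j₀} + 1` yields a vanishing sequence `c'` with
`ρ̂(1,d;a,c') ≥ 0` and `ρ(1,d;a,c') = ρ(1,d;a,c) - 1`. -/
theorem first_move (r : ℕ) (d : ℤ) (hd : 0 ≤ d)
    (a c : Fin (r + 1) → ℤ)
    (ha : IsVanishingSeq r d a) (hc : IsVanishingSeq r d c)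
    (hρhat : 0 ≤ BNrhoHat 1 r d a c) (hρ : 0 < BNrho 1 r d a c)
    (j₀ : Fin (r + 1))
    (hmin : ∀ j : Fin (r + 1), a j₀ + c j₀.rev ≤ a j + c j.rev)
    (hminIdx : ∀ j : Fin (r + 1), a j + c j.rev = a j₀ + c j₀.rev → j₀ ≤ j) :
    a j₀ + c j₀.rev ≤ d - 1 ∧
    (j₀ = 0 ∨ ∀ i : Fin (r + 1), (i : ℕ) = (j₀.rev : ℕ) + 1 → c j₀.rev + 2 ≤ c i) ∧
    (IsVanishingSeq r d (Function.update c j₀.rev (c j₀.rev + 1)) ∧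
      0 ≤ BNrhoHat 1 r d a (Function.update c j₀.rev (c j₀.rev + 1)) ∧
      BNrho 1 r d a (Function.update c j₀.rev (c j₀.rev + 1)) = BNrho 1 r d a c - 1) :=
  first_move_general r d a c ha hc hρhat hρ j₀ hmin hminIdx
end

section
/- (Second type of move, case ρ̂_1 > 0.) Let g ≥ 2 be an integer, let a_•, b_•, c_• be vanishing sequences of rank r and degree d, and let a²_• be the vanishing sequence complementary to c_•, i.e. a²_j = d − c_{r−j}. Suppose ρ̂(1,d;a_•,c_•) > 0 and ρ̂(g−1,d;a²_•,b_•) = 0. Let j_0 be the minimal index at which a²_j + b_{r−j} attains its maximum value over j = 0,…,r. Then: (i) a_{j_0} + c_{r−j_0} ≤ d − 1; (ii) a²_{j_0} + b_{r−j_0} > d − (g−1); (iii) either j_0 = 0 or a²_{j_0−1} < a²_{j_0} − 1; and (iv) the sequences c′_• obtained from c_• by replacing c_{r−j_0} with c_{r−j_0} + 1, and a²′_• obtained from a²_• by replacing a²_{j_0} with a²_{j_0} − 1, are complementary vanishing sequences of rank r and degree d satisfying ρ̂(1,d;a_•,c′_•) ≥ 0 and ρ̂(g−1,d;a²′_•,b_•)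 > 0. -/
/-!
Positivity of `ρ̂(1,d;a,c)` forces every `a_j + c_{r-j} ≤ d - 1`, so raising one entry of `c` by one
lowers `ρ̂(1)` by at most one. Since `ρ̂(g-1,d;a²,b) = 0 < g - 1`, some, hence the maximal, sum
`a²_j + b_{r-j}` exceeds `d - (g-1)`; lowering `a²_{j₀}` by one therefore lowers exactly one
positive term of `ρ̂(g-1)` and raises it to `1`. Minimality of `j₀` and strict monotonicity of `b`
leave a gap below `a²_{j₀}`, so the lowered sequence is still a vanishing sequence, and so is its
complement `c'`.
-/

open Function

def Complementary (r : ℕ) (d : ℤ) (b a : Fin (r + 1) → ℤ) : Prop :=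
  ∀ j : Fin (r + 1), b j + a j.rev = d

section

variable {r : ℕ} {d : ℤ}

theorem Complementary.symm {a b : Fin (r + 1) → ℤ} (h : Complementary r d b a) :
    Complementary r d a b := fun j => by
  rw [← h j.rev, Fin.rev_rev, add_comm]

theorem Complementary.update {a b : Fin (r + 1) → ℤ} (h : Complementary r d b a)
    (i : Fin (r + 1)) (v : ℤ) :
    Complementary r d (update b i.rev (b i.rev + v)) (update a i (a i - v)) := by
  intro j
  by_cases hj : j = i.rev
  · subst hj
    rw [update_self, Fin.rev_rev, update_self, ← h i.rev, Fin.rev_rev]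
    ring
  · have hj' : j.rev ≠ i := fun e => hj (by rw [← e, Fin.rev_rev])
    rw [update_of_ne hj, update_of_ne hj', h j]

theorem IsVanishingSeq.nonneg {a : Fin (r + 1) → ℤ} (ha : IsVanishingSeq r d a)
    (j : Fin (r + 1)) : 0 ≤ a j :=
  ha.2.1.trans (ha.1.monotone (Fin.zero_le j))

theorem IsVanishingSeq.of_complementary {a b : Fin (r + 1) → ℤ} (hb : IsVanishingSeq r d b)
    (h : Complementary r d b a) : IsVanishingSeq r d a := by
  have ha : ∀ j, a j = d - b j.rev := fun j => by rw [← h j.rev, Fin.rev_rev]; ring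
  obtain ⟨hmono, h0, hlast⟩ := hb
  refine ⟨fun k l hkl => ?_, ?_, ?_⟩
  · rw [ha, ha]
    linarith [hmono (Fin.rev_lt_rev.mpr hkl)]
  · rw [ha, Fin.rev_zero]
    linarith
  · rw [ha, Fin.rev_last]
    linarith

theorem IsVanishingSeq.update_sub_one {a : Fin (r + 1) → ℤ} (ha : IsVanishingSeq r d a)
    {i : Fin (r + 1)} (hpos : 0 < a i) (hgap : ∀ k < i, a k < a i - 1) :
    IsVanishingSeq r d (update a i (a i - 1)) := by
  have hle : ∀ j, update a i (a i - 1) j ≤ a j := fun j => by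
    by_cases hj : j = i
    · subst hj; simp
    · rw [update_of_ne hj]
  refine ⟨fun k l hkl => ?_, ?_, (hle _).trans ha.2.2⟩
  · by_cases hl : l = i
    · subst hl
      rw [update_of_ne hkl.ne, update_self]
      exact hgap k hkl
    · rw [update_of_ne hl]
      exact (hle k).trans_lt (ha.1 hkl)
  · by_cases h0 : (0 : Fin (r + 1)) = i
    · subst h0
      rw [update_self]
      omega
    · rw [update_of_ne h0]
      exact ha.2.1

end

section

variable {r : ℕ} {d g : ℤ} {a b : Fin (r + 1) → ℤ}

theorem BNrhoHat_comm : BNrhoHat g r d a b = BNrhoHat g r d b a := by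
  unfold BNrhoHat
  rw [← Equiv.sum_comp Fin.revPerm]
  simp only [Fin.revPerm_apply, Fin.rev_rev, add_comm]

theorem BNrhoHat_update_left (i : Fin (r + 1)) (v : ℤ) :
    BNrhoHat g r d (update a i v) b = BNrhoHat g r d a b
      + max (a i + b i.rev - (d - g)) 0 - max (v + b i.rev - (d - g)) 0 := by
  unfold BNrhoHat
  rw [← Finset.add_sum_erase _ _ (Finset.mem_univ i),
    ← Finset.add_sum_erase _ _ (Finset.mem_univ i), update_self,
    Finset.sum_congr rfl fun j hj => by rw [update_of_ne (Finset.ne_of_mem_erase hj)]]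
  ring

theorem BNrhoHat_update_right (i : Fin (r + 1)) (v : ℤ) :
    BNrhoHat g r d a (update b i v) = BNrhoHat g r d a b
      + max (a i.rev + b i - (d - g)) 0 - max (a i.rev + v - (d - g)) 0 := by
  rw [BNrhoHat_comm, BNrhoHat_update_left, BNrhoHat_comm, add_comm (b i), add_comm v]

theorem add_rev_le_sub_BNrhoHat (j : Fin (r + 1)) :
    a j + b j.rev ≤ d - BNrhoHat g r d a b := by
  have hterm : max (a j + b j.rev - (d - g)) 0 ≤ ∑ k, max (a k + b k.rev - (d - g)) 0 :=
    Finset.single_le_sum (f := fun k => max (a k + b k.rev - (d - g)) 0)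
      (fun k _ => le_max_right _ _) (Finset.mem_univ j)
  unfold BNrhoHat
  linarith [le_max_left (a j + b j.rev - (d - g)) 0]

theorem exists_lt_add_rev_of_BNrhoHat_lt (h : BNrhoHat g r d a b < g) :
    ∃ j, d - g < a j + b j.rev := by
  by_contra! hle
  have hsum : ∑ j, max (a j + b j.rev - (d - g)) 0 = 0 :=
    Finset.sum_eq_zero fun j _ => max_eq_right (by linarith [hle j])
  unfold BNrhoHat at h
  omega

end

theorem lt_sub_one_of_lt_first_argmax {r : ℕ} {a b : Fin (r + 1) → ℤ} (hb : StrictMono b)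
    {j₀ : Fin (r + 1)} (hmax : ∀ j, a j + b j.rev ≤ a j₀ + b j₀.rev)
    (hmin : ∀ j, a j + b j.rev = a j₀ + b j₀.rev → j₀ ≤ j) {i : Fin (r + 1)} (hi : i < j₀) :
    a i < a j₀ - 1 := by
  have hlt : a i + b i.rev < a j₀ + b j₀.rev :=
    (hmax i).lt_of_ne fun e => (hmin i e).not_gt hi
  linarith [hb (Fin.rev_lt_rev.mpr hi)]

theorem second_move_pos_general (r : ℕ) (d : ℤ) (g : ℤ) (hg : 2 ≤ g)
    (a b c a₂ : Fin (r + 1) → ℤ)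
    (ha : IsVanishingSeq r d a) (hb : IsVanishingSeq r d b) (hc : IsVanishingSeq r d c)
    (ha₂def : ∀ j : Fin (r + 1), a₂ j = d - c j.rev)
    (hρ₁ : 0 < BNrhoHat 1 r d a c) (hρ₂ : BNrhoHat (g - 1) r d a₂ b = 0)
    (j₀ : Fin (r + 1))
    (hmax : ∀ j : Fin (r + 1), a₂ j + b j.rev ≤ a₂ j₀ + b j₀.rev)
    (hminIdx : ∀ j : Fin (r + 1), a₂ j + b j.rev = a₂ j₀ + b j₀.rev → j₀ ≤ j) :
    a j₀ + c j₀.rev ≤ d - 1 ∧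
    d - (g - 1) < a₂ j₀ + b j₀.rev ∧
    (j₀ = 0 ∨ ∀ i : Fin (r + 1), (i : ℕ) + 1 = (j₀ : ℕ) → a₂ i < a₂ j₀ - 1) ∧
    (IsVanishingSeq r d (Function.update c j₀.rev (c j₀.rev + 1)) ∧
      IsVanishingSeq r d (Function.update a₂ j₀ (a₂ j₀ - 1)) ∧
      (∀ j : Fin (r + 1), Function.update c j₀.rev (c j₀.rev + 1) j +
        Function.update a₂ j₀ (a₂ j₀ - 1) j.rev = d) ∧
      0 ≤ BNrhoHat 1 r d a (Function.update c j₀.rev (c j₀.rev + 1)) ∧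
      0 < BNrhoHat (g - 1) r d (Function.update a₂ j₀ (a₂ j₀ - 1)) b) := by
  have hc₂ : Complementary r d c a₂ := fun j => by rw [ha₂def, Fin.rev_rev]; ring
  have ha₂ : IsVanishingSeq r d a₂ := hc.of_complementary hc₂
  have hsum₁ : ∀ j, a j + c j.rev ≤ d - 1 := fun j =>
    (add_rev_le_sub_BNrhoHat (g := 1) (d := d) j).trans (by omega)
  have hexcess : d - (g - 1) < a₂ j₀ + b j₀.rev := by
    obtain ⟨j, hj⟩ :=
      exists_lt_add_rev_of_BNrhoHat_lt (by omega : BNrhoHat (g - 1) r d a₂ b < g - 1)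
    exact hj.trans_le (hmax j)
  have hgap : ∀ i < j₀, a₂ i < a₂ j₀ - 1 := fun i hi =>
    lt_sub_one_of_lt_first_argmax hb.1 hmax hminIdx hi
  have hpos : 0 < a₂ j₀ := by
    rw [ha₂def]
    linarith [hsum₁ j₀, ha.nonneg j₀]
  have ha₂' := ha₂.update_sub_one hpos hgap
  have hc₂' := hc₂.update j₀ 1
  refine ⟨hsum₁ j₀, hexcess, Or.inr fun i hi => hgap i (Fin.lt_def.mpr (by omega)),
    ha₂'.of_complementary hc₂'.symm, ha₂', hc₂', ?_, ?_⟩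
  · rw [BNrhoHat_update_right, Fin.rev_rev]
    have := hsum₁ j₀
    omega
  · rw [BNrhoHat_update_left, hρ₂]
    omega

/-- Second type of move, case ρ̂₁ > 0: `g ≥ 2`, `a`, `b`, `c` vanishing
sequences, `a²` the complementary sequence of `c` (`a²ⱼ = d - c_{r-j}`),
`ρ̂(1,d;a,c) > 0`, `ρ̂(g-1,d;a²,b) = 0`, and `j₀` the minimal index at which
`a²ⱼ + b_{r-j}` attains its maximum. Then:
(i) `a_{j₀} + c_{r-j₀} ≤ d - 1`;
(ii) `a²_{j₀} + b_{r-j₀} > d - (g-1)`;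
(iii) either `j₀ = 0` or `a²_{j₀-1} < a²_{j₀} - 1`; and
(iv) replacing `c_{r-j₀}` by `c_{r-j₀} + 1` and `a²_{j₀}` by `a²_{j₀} - 1` yields
complementary vanishing sequences `c'`, `a²'` with `ρ̂(1,d;a,c') ≥ 0` and
`ρ̂(g-1,d;a²',b) > 0`. -/
theorem second_move_pos (r : ℕ) (d : ℤ) (hd : 0 ≤ d) (g : ℤ) (hg : 2 ≤ g)
    (a b c a₂ : Fin (r + 1) → ℤ)
    (ha : IsVanishingSeq r d a) (hb : IsVanishingSeq r d b) (hc : IsVanishingSeq r d c)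
    (ha₂def : ∀ j : Fin (r + 1), a₂ j = d - c j.rev)
    (hρ₁ : 0 < BNrhoHat 1 r d a c) (hρ₂ : BNrhoHat (g - 1) r d a₂ b = 0)
    (j₀ : Fin (r + 1))
    (hmax : ∀ j : Fin (r + 1), a₂ j + b j.rev ≤ a₂ j₀ + b j₀.rev)
    (hminIdx : ∀ j : Fin (r + 1), a₂ j + b j.rev = a₂ j₀ + b j₀.rev → j₀ ≤ j) :
    a j₀ + c j₀.rev ≤ d - 1 ∧
    d - (g - 1) < a₂ j₀ + b j₀.rev ∧
    (j₀ = 0 ∨ ∀ i : Fin (r + 1), (i : ℕ) + 1 = (j₀ : ℕ) → a₂ i < a₂ j₀ - 1) ∧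
    (IsVanishingSeq r d (Function.update c j₀.rev (c j₀.rev + 1)) ∧
      IsVanishingSeq r d (Function.update a₂ j₀ (a₂ j₀ - 1)) ∧
      (∀ j : Fin (r + 1), Function.update c j₀.rev (c j₀.rev + 1) j +
        Function.update a₂ j₀ (a₂ j₀ - 1) j.rev = d) ∧
      0 ≤ BNrhoHat 1 r d a (Function.update c j₀.rev (c j₀.rev + 1)) ∧
      0 < BNrhoHat (g - 1) r d (Function.update a₂ j₀ (a₂ j₀ - 1)) b) :=
  second_move_pos_general r d g hg a b c a₂ ha hb hc ha₂def hρ₁ hρ₂ j₀ hmax hminIdx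
end
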